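/- Let t < T be real numbers and let φ_j(x) = √((2j+1)/(T−t)) · P_j((2x − (T+t))/(T−t)) be the scaled Legendre system on [t,T]. Define C_{j_2 j_1} = ∫_t^T φ_{j_2}(t_2) (∫_t^{t_2} φ_{j_1}(t_1) dt_1) dt_2. Then for every q ≥ 1, Σ_{j_1=0}^q Σ_{j_2=0}^q C_{j_2 j_1}² = ((T−t)²/2)·(1/2 + Σ_{i=1}^q 1/(4i²−1)). In particular Σ_{j_1,j_2=0}^∞ C_{j_2 j_1}² = (T−t)²/2. -/

import Mathlib

/-- The `n`-th Legendre polynomial, via Rodrigues' formula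
`P_n(x) = (1/(2^n n!)) (d/dx)^n [(x²−1)^n]`. -/
noncomputable def legendre (n : ℕ) : Polynomial ℝ :=
  (1 / ((2 : ℝ) ^ n * n.factorial)) • Polynomial.derivative^[n] ((Polynomial.X ^ 2 - 1) ^ n)

/-!
After the affine change of variables `[t, T] → [-1, 1]`, `C_{j₂j₁}` is a multiple of
`g(j₂, j₁) = ∫_{-1}^1 P_{j₂} Q_{j₁}`, where `Q_j(x) = ∫_{-1}^x P_j` is a polynomial of degree
`j + 1`. Integrating by parts `n` times against Rodrigues' formula gives, for `deg q ≤ n`,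
`∫_{-1}^1 P_n q = 2^(n+1) (n!)² / (2n+1)! · [xⁿ] q`.
Hence `g(a, b) = 0` for `a ≥ b + 2` and `g(b + 1, b) = 2 / ((2b+1)(2b+3))`, while integrating
`Q_a Q_b'` by parts gives `g(a, b) + g(b, a) = Q_a(1) Q_b(1)`, which is `4` for `a = b = 0` and `0`
otherwise. So the array `C_{j₂j₁}²` is tridiagonal, its diagonal is `((T-t)²/4, 0, 0, …)`, its
off-diagonal entries are `(T-t)² / (4(2b+1)(2b+3))`, and their sum telescopes to `(T-t)²/2`.
-/

section LegendreKernel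

open Polynomial intervalIntegral MeasureTheory Filter Topology Finset
open scoped Nat

theorem sum_range_sum_range_of_tridiagonal {M : Type*} [AddCommMonoid M] {F : ℕ → ℕ → M}
    (hF : ∀ i j, i + 2 ≤ j ∨ j + 2 ≤ i → F i j = 0) (n : ℕ) :
    ∑ j ∈ range (n + 1), ∑ i ∈ range (n + 1), F i j =
      ∑ i ∈ range (n + 1), F i i + ∑ i ∈ range n, (F (i + 1) i + F i (i + 1)) := by
  induction n with
  | zero => simp
  | succ n ih =>
    have hrow : ∑ j ∈ range (n + 1), F (n + 1) j = F (n + 1) n := by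
      rw [sum_range_succ, sum_eq_zero fun j hj => hF _ _ (Or.inr (by simp at hj; omega)),
        zero_add]
    have hcol : ∑ i ∈ range (n + 1), F i (n + 1) = F n (n + 1) := by
      rw [sum_range_succ, sum_eq_zero fun i hi => hF _ _ (Or.inl (by simp at hi; omega)),
        zero_add]
    have hinner : ∀ j,
        ∑ i ∈ range (n + 1 + 1), F i j = ∑ i ∈ range (n + 1), F i j + F (n + 1) j :=
      fun j => sum_range_succ _ _
    simp only [hinner]
    rw [sum_add_distrib, sum_range_succ (fun j => ∑ i ∈ range (n + 1), F i j),
      sum_range_succ (F (n + 1)), hcol, hrow, ih, sum_range_succ (fun i => F i i) (n + 1),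
      sum_range_succ (fun i => F (i + 1) i + F i (i + 1)) n]
    abel

theorem hasSum_of_tendsto_sum_of_nonneg {ι : Type*} {f : ι → ℝ} (hf : 0 ≤ f)
    {s : ℕ → Finset ι} (hs : Tendsto s atTop atTop) {a : ℝ}
    (ha : Tendsto (fun n => ∑ i ∈ s n, f i) atTop (𝓝 a)) : HasSum f a := by
  have hbound : ∀ u : Finset ι, ∑ i ∈ u, f i ≤ a := fun u =>
    ge_of_tendsto ha ((tendsto_atTop.1 hs u).mono fun n hn =>
      sum_le_sum_of_subset_of_nonneg hn fun i _ _ => hf i)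
  have hf_sum := summable_of_sum_le hf hbound
  rw [← tendsto_nhds_unique (hf_sum.hasSum.comp hs) ha]
  exact hf_sum.hasSum

theorem tendsto_range_product_range :
    Tendsto (fun n => range n ×ˢ range n) atTop atTop := by
  have hpair := tendsto_finset_range.prodMk tendsto_finset_range
  rw [prod_atTop_atTop_eq] at hpair
  exact tendsto_finsetProd_atTop.comp hpair

namespace Polynomial

theorem intervalIntegrable_eval (p : ℝ[X]) (a b : ℝ) :
    IntervalIntegrable (fun x => p.eval x) volume a b :=
  p.continuous.intervalIntegrable a b

theorem integral_eval_derivative (p : ℝ[X]) (a b : ℝ) :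
    ∫ x in a..b, (derivative p).eval x = p.eval b - p.eval a :=
  integral_eq_sub_of_hasDerivAt (fun x _ => p.hasDerivAt x) (intervalIntegrable_eval _ a b)

theorem integral_eval_mul_derivative (p q : ℝ[X]) (a b : ℝ) :
    ∫ x in a..b, p.eval x * (derivative q).eval x =
      p.eval b * q.eval b - p.eval a * q.eval a - ∫ x in a..b, (derivative p).eval x * q.eval x :=
  integral_mul_deriv_eq_deriv_mul (fun x _ => p.hasDerivAt x) (fun x _ => q.hasDerivAt x)
    (intervalIntegrable_eval _ a b) (intervalIntegrable_eval _ a b)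

theorem integral_eval_mul_iterate_derivative {p : ℝ[X]} {a b : ℝ} {n : ℕ}
    (hp : ∀ k < n, (derivative^[k] p).IsRoot a ∧ (derivative^[k] p).IsRoot b) (q : ℝ[X]) :
    ∫ x in a..b, q.eval x * (derivative^[n] p).eval x =
      (-1) ^ n * ∫ x in a..b, (derivative^[n] q).eval x * p.eval x := by
  induction n generalizing q with
  | zero => simp
  | succ n ih =>
    obtain ⟨ha, hb⟩ := hp n n.lt_succ_self
    rw [Function.iterate_succ_apply', integral_eval_mul_derivative, ha.eq_zero, hb.eq_zero,
      ih (fun k hk => hp k (hk.trans n.lt_succ_self)), ← Function.iterate_succ_apply]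
    ring

theorem iterate_derivative_eq_C_of_natDegree_le {R : Type*} [CommSemiring R] {q : R[X]} {n : ℕ}
    (hq : q.natDegree ≤ n) : derivative^[n] q = C (n ! * q.coeff n) := by
  rw [eq_C_of_natDegree_le_zero ((natDegree_iterate_derivative q n).trans (by omega)),
    coeff_iterate_derivative, zero_add, Nat.descFactorial_self, nsmul_eq_mul]

variable {K : Type*} [Field K] [CharZero K]

noncomputable def primitive (p : K[X]) : K[X] :=
  p.sum fun k a => C (a / (k + 1)) * X ^ (k + 1)

theorem derivative_primitive (p : K[X]) : derivative (primitive p) = p := by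
  rw [primitive, Polynomial.sum_def, map_sum]
  conv_rhs => rw [← p.sum_C_mul_X_pow_eq, Polynomial.sum_def]
  refine Finset.sum_congr rfl fun k _ => ?_
  rw [derivative_C_mul_X_pow, Nat.add_sub_cancel, Nat.cast_add_one,
    div_mul_cancel₀ _ (Nat.cast_add_one_ne_zero k)]

theorem coeff_succ_of_derivative_eq {Q p : K[X]} (h : derivative Q = p) (k : ℕ) :
    Q.coeff (k + 1) = p.coeff k / (k + 1) := by
  rw [← h, coeff_derivative, mul_div_cancel_right₀ _ (Nat.cast_add_one_ne_zero k)]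

theorem natDegree_le_of_derivative_eq {Q p : K[X]} {n : ℕ} (h : derivative Q = p)
    (hp : p.natDegree ≤ n) : Q.natDegree ≤ n + 1 := by
  refine natDegree_le_iff_coeff_eq_zero.2 fun m hm => ?_
  obtain ⟨k, rfl⟩ : ∃ k, m = k + 1 := ⟨m - 1, by omega⟩
  rw [coeff_succ_of_derivative_eq h, coeff_eq_zero_of_natDegree_lt (by omega), zero_div]

end Polynomial

theorem isRoot_iterate_derivative_X_sq_sub_one_pow {R : Type*} [CommRing R] [IsDomain R]
    {n k : ℕ} (hk : k < n) :
    (derivative^[k] ((X ^ 2 - 1) ^ n : R[X])).IsRoot (-1) ∧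
      (derivative^[k] ((X ^ 2 - 1) ^ n : R[X])).IsRoot 1 := by
  have hsplit : (X ^ 2 - 1 : R[X]) = (X - C 1) * (X - C (-1)) := by
    simp only [map_one, map_neg, sub_neg_eq_add]; ring
  have hne : ((X ^ 2 - 1) ^ n : R[X]) ≠ 0 := by
    rw [hsplit, mul_pow]
    exact mul_ne_zero (pow_ne_zero _ (X_sub_C_ne_zero 1)) (pow_ne_zero _ (X_sub_C_ne_zero _))
  constructor <;> refine isRoot_iterate_derivative_of_lt_rootMultiplicity
    (hk.trans_le ((le_rootMultiplicity_iff hne).2 ?_))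
  · exact ⟨(X - C 1) ^ n, by rw [hsplit, mul_pow, mul_comm]⟩
  · exact ⟨(X - C (-1)) ^ n, by rw [hsplit, mul_pow]⟩

theorem monic_X_sq_sub_one {R : Type*} [CommRing R] : (X ^ 2 - 1 : R[X]).Monic := by
  simpa using monic_X_pow_sub_C (1 : R) two_ne_zero

theorem natDegree_X_sq_sub_one_pow {R : Type*} [CommRing R] [Nontrivial R] (n : ℕ) :
    ((X ^ 2 - 1) ^ n : R[X]).natDegree = 2 * n := by
  rw [monic_X_sq_sub_one.natDegree_pow,
    show (X ^ 2 - 1 : R[X]) = X ^ 2 - C 1 by simp, natDegree_X_pow_sub_C, mul_comm]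

theorem integral_X_sq_sub_one_pow_succ (n : ℕ) :
    (2 * (n : ℝ) + 3) * ∫ x in (-1 : ℝ)..1, (x ^ 2 - 1) ^ (n + 1) =
      -((2 * (n : ℝ) + 2) * ∫ x in (-1 : ℝ)..1, (x ^ 2 - 1) ^ n) := by
  have hderiv : ∀ x : ℝ, HasDerivAt (fun x => x * (x ^ 2 - 1) ^ (n + 1))
      ((2 * n + 3) * (x ^ 2 - 1) ^ (n + 1) + (2 * n + 2) * (x ^ 2 - 1) ^ n) x := by
    intro x
    refine ((hasDerivAt_id' x).fun_mul
      (((hasDerivAt_pow 2 x).sub_const 1).fun_pow (n + 1))).congr_deriv ?_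
    simp only [Nat.add_sub_cancel, Nat.cast_add_one]
    ring
  have hint : ∀ m : ℕ, IntervalIntegrable (fun x : ℝ => (x ^ 2 - 1) ^ m) volume (-1) 1 :=
    fun m => (by fun_prop : Continuous fun x : ℝ => (x ^ 2 - 1) ^ m).intervalIntegrable _ _
  have hftc := integral_eq_sub_of_hasDerivAt (fun x _ => hderiv x)
    (((hint _).const_mul _).add ((hint _).const_mul _))
  rw [integral_add ((hint _).const_mul _) ((hint _).const_mul _),
    intervalIntegral.integral_const_mul, intervalIntegral.integral_const_mul] at hftc
  norm_num at hftc
  linarith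

theorem cast_factorial_two_mul_succ_add_one (n : ℕ) :
    ((2 * (n + 1) + 1)! : ℝ) = (2 * n + 3) * (2 * n + 2) * (2 * n + 1)! := by
  rw [show 2 * (n + 1) + 1 = 2 * n + 1 + 1 + 1 by ring, Nat.factorial_succ (2 * n + 1 + 1),
    Nat.factorial_succ (2 * n + 1)]
  push_cast
  ring

theorem integral_X_sq_sub_one_pow (n : ℕ) :
    ∫ x in (-1 : ℝ)..1, (x ^ 2 - 1) ^ n =
      (-1 : ℝ) ^ n * 2 ^ (2 * n + 1) * (n ! : ℝ) ^ 2 / (2 * n + 1)! := by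
  induction n with
  | zero => norm_num
  | succ n ih =>
    have hrec := integral_X_sq_sub_one_pow_succ n
    rw [ih, mul_comm] at hrec
    rw [eq_div_of_mul_eq (by positivity) hrec, cast_factorial_two_mul_succ_add_one,
      Nat.factorial_succ n]
    field_simp
    push_cast
    ring

theorem eval_legendre (n : ℕ) (x : ℝ) :
    (legendre n).eval x =
      (2 ^ n * n ! : ℝ)⁻¹ * (derivative^[n] ((X ^ 2 - 1) ^ n : ℝ[X])).eval x := by
  rw [legendre, eval_smul, smul_eq_mul, one_div]

theorem integral_legendre_mul {n : ℕ} {q : ℝ[X]} (hq : q.natDegree ≤ n) :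
    ∫ x in (-1 : ℝ)..1, (legendre n).eval x * q.eval x =
      2 ^ (n + 1) * (n ! : ℝ) ^ 2 / (2 * n + 1)! * q.coeff n := by
  have hroots := fun k (hk : k < n) => isRoot_iterate_derivative_X_sq_sub_one_pow (R := ℝ) hk
  simp_rw [eval_legendre, mul_assoc, mul_comm _ (q.eval _)]
  rw [intervalIntegral.integral_const_mul, integral_eval_mul_iterate_derivative hroots,
    iterate_derivative_eq_C_of_natDegree_le hq]
  simp only [eval_C, eval_pow, eval_sub, eval_X, eval_one]
  rw [intervalIntegral.integral_const_mul, integral_X_sq_sub_one_pow]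
  have hsign : ((-1 : ℝ) ^ n) * (-1) ^ n = 1 := by rw [← mul_pow]; norm_num
  field_simp
  linear_combination (2 : ℝ) ^ (2 * n + 1) * q.coeff n * hsign

theorem integral_legendre_mul_eq_zero {n : ℕ} {q : ℝ[X]} (hq : q.natDegree < n) :
    ∫ x in (-1 : ℝ)..1, (legendre n).eval x * q.eval x = 0 := by
  rw [integral_legendre_mul hq.le, coeff_eq_zero_of_natDegree_lt hq, mul_zero]

theorem natDegree_legendre_le (n : ℕ) : (legendre n).natDegree ≤ n := by
  refine (natDegree_smul_le _ _).trans ((natDegree_iterate_derivative _ n).trans ?_)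
  rw [natDegree_X_sq_sub_one_pow]
  omega

theorem coeff_legendre_self (n : ℕ) :
    (legendre n).coeff n = (2 * n)! / (2 ^ n * (n ! : ℝ) ^ 2) := by
  have hlead : ((X ^ 2 - 1) ^ n : ℝ[X]).coeff (n + n) = 1 := by
    rw [← two_mul, ← natDegree_X_sq_sub_one_pow (R := ℝ)]
    exact monic_X_sq_sub_one.pow n
  have hdesc : (n ! : ℝ) * (2 * n).descFactorial n = (2 * n)! := by
    exact_mod_cast (show 2 * n - n = n by omega) ▸ Nat.factorial_mul_descFactorial (by omega)
  rw [legendre, coeff_smul, coeff_iterate_derivative, hlead, nsmul_eq_mul, mul_one, ← two_mul,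
    smul_eq_mul, ← hdesc]
  field_simp

noncomputable def legendrePrimitive (n : ℕ) : ℝ[X] :=
  primitive (legendre n) - C ((primitive (legendre n)).eval (-1))

theorem derivative_legendrePrimitive (n : ℕ) :
    derivative (legendrePrimitive n) = legendre n := by
  rw [legendrePrimitive, derivative_sub, derivative_C, sub_zero, derivative_primitive]

theorem legendrePrimitive_eval_neg_one (n : ℕ) : (legendrePrimitive n).eval (-1) = 0 := by
  simp [legendrePrimitive]

theorem integral_legendre (n : ℕ) (y : ℝ) :
    ∫ x in (-1 : ℝ)..y, (legendre n).eval x = (legendrePrimitive n).eval y := by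
  rw [← derivative_legendrePrimitive, integral_eval_derivative, legendrePrimitive_eval_neg_one,
    sub_zero]

theorem legendrePrimitive_eval_one (n : ℕ) :
    (legendrePrimitive n).eval 1 = if n = 0 then 2 else 0 := by
  have h := integral_legendre_mul (q := 1) (n := n) (by simp)
  simp only [eval_one, mul_one, integral_legendre, coeff_one] at h
  rw [h]
  split_ifs <;> simp_all

theorem natDegree_legendrePrimitive_le (n : ℕ) : (legendrePrimitive n).natDegree ≤ n + 1 :=
  natDegree_le_of_derivative_eq (derivative_legendrePrimitive n) (natDegree_legendre_le n)

theorem coeff_legendrePrimitive_succ (n : ℕ) :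
    (legendrePrimitive n).coeff (n + 1) = (2 * n)! / (2 ^ n * (n ! : ℝ) ^ 2 * (n + 1)) := by
  rw [coeff_succ_of_derivative_eq (derivative_legendrePrimitive n), coeff_legendre_self, div_div]

noncomputable def legendreKernelCoeff (a b : ℕ) : ℝ :=
  ∫ x in (-1 : ℝ)..1, (legendre a).eval x * (legendrePrimitive b).eval x

theorem legendreKernelCoeff_eq_zero_of_add_two_le {a b : ℕ} (h : b + 2 ≤ a) :
    legendreKernelCoeff a b = 0 :=
  integral_legendre_mul_eq_zero ((natDegree_legendrePrimitive_le b).trans_lt (by omega))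

theorem legendreKernelCoeff_add_swap (a b : ℕ) :
    legendreKernelCoeff a b + legendreKernelCoeff b a = if a = 0 ∧ b = 0 then 4 else 0 := by
  have hparts := integral_eval_mul_derivative (legendrePrimitive b) (legendrePrimitive a) (-1) 1
  simp only [derivative_legendrePrimitive, legendrePrimitive_eval_neg_one, mul_zero, sub_zero,
    legendrePrimitive_eval_one] at hparts
  rw [eq_sub_iff_add_eq] at hparts
  have hswap : legendreKernelCoeff a b =
      ∫ x in (-1 : ℝ)..1, (legendrePrimitive b).eval x * (legendre a).eval x :=
    integral_congr fun x _ => mul_comm _ _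
  rw [hswap, legendreKernelCoeff, hparts]
  by_cases ha : a = 0 <;> by_cases hb : b = 0 <;> simp [ha, hb]
  norm_num

theorem legendreKernelCoeff_succ_self (n : ℕ) :
    legendreKernelCoeff (n + 1) n = 2 / ((2 * n + 1) * (2 * n + 3)) := by
  rw [legendreKernelCoeff, integral_legendre_mul (natDegree_legendrePrimitive_le n),
    coeff_legendrePrimitive_succ, cast_factorial_two_mul_succ_add_one, Nat.factorial_succ (2 * n),
    Nat.factorial_succ n]
  field_simp
  push_cast
  ring

theorem legendreKernelCoeff_self_succ (n : ℕ) :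
    legendreKernelCoeff n (n + 1) = -(2 / ((2 * n + 1) * (2 * n + 3))) := by
  have h := legendreKernelCoeff_add_swap (n + 1) n
  rw [if_neg (by omega), legendreKernelCoeff_succ_self] at h
  linarith

theorem legendreKernelCoeff_zero_zero : legendreKernelCoeff 0 0 = 2 := by
  have h := legendreKernelCoeff_add_swap 0 0
  norm_num at h
  linarith

theorem legendreKernelCoeff_self {n : ℕ} (hn : n ≠ 0) : legendreKernelCoeff n n = 0 := by
  have h := legendreKernelCoeff_add_swap n n
  rw [if_neg (by tauto)] at h
  linarith

theorem legendreKernelCoeff_eq_zero_of_add_two_le_or {a b : ℕ} (h : a + 2 ≤ b ∨ b + 2 ≤ a) :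
    legendreKernelCoeff a b = 0 := by
  rcases h with h | h
  · have hsum := legendreKernelCoeff_add_swap a b
    rw [if_neg (by omega), legendreKernelCoeff_eq_zero_of_add_two_le h, add_zero] at hsum
    exact hsum
  · exact legendreKernelCoeff_eq_zero_of_add_two_le h

theorem integral_comp_affine_unit {t T : ℝ} (h : t ≠ T) (f : ℝ → ℝ) (s : ℝ) :
    ∫ x in t..s, f ((2 * x - (T + t)) / (T - t)) =
      (T - t) / 2 * ∫ u in (-1 : ℝ)..(2 * s - (T + t)) / (T - t), f u := by
  have hTt : T - t ≠ 0 := sub_ne_zero.2 h.symm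
  have haff : ∀ x : ℝ, (2 * x - (T + t)) / (T - t) = 2 / (T - t) * x + -(T + t) / (T - t) := by
    intro x; field_simp; ring
  simp only [haff]
  rw [intervalIntegral.integral_comp_mul_add f (div_ne_zero two_ne_zero hTt), smul_eq_mul,
    inv_div]
  congr 2
  field_simp; ring

noncomputable def scaledLegendre (t T : ℝ) (j : ℕ) (x : ℝ) : ℝ :=
  Real.sqrt ((2 * (j : ℝ) + 1) / (T - t)) * (legendre j).eval ((2 * x - (T + t)) / (T - t))

noncomputable def scaledLegendreCoeff (t T : ℝ) (j2 j1 : ℕ) : ℝ :=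
  ∫ t2 in t..T, scaledLegendre t T j2 t2 * ∫ t1 in t..t2, scaledLegendre t T j1 t1

theorem integral_scaledLegendre {t T : ℝ} (h : t ≠ T) (j : ℕ) (s : ℝ) :
    ∫ x in t..s, scaledLegendre t T j x = Real.sqrt ((2 * (j : ℝ) + 1) / (T - t)) *
      ((T - t) / 2 * (legendrePrimitive j).eval ((2 * s - (T + t)) / (T - t))) := by
  simp only [scaledLegendre]
  rw [intervalIntegral.integral_const_mul,
    integral_comp_affine_unit h fun u => (legendre j).eval u,
    integral_legendre]

theorem scaledLegendreCoeff_eq {t T : ℝ} (h : t ≠ T) (j2 j1 : ℕ) :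
    scaledLegendreCoeff t T j2 j1 = Real.sqrt ((2 * (j2 : ℝ) + 1) / (T - t)) *
      Real.sqrt ((2 * (j1 : ℝ) + 1) / (T - t)) * ((T - t) / 2) ^ 2 *
        legendreKernelCoeff j2 j1 := by
  have hTt : T - t ≠ 0 := sub_ne_zero.2 h.symm
  simp only [scaledLegendreCoeff, integral_scaledLegendre h]
  simp only [scaledLegendre]
  have hfun : ∀ s : ℝ, Real.sqrt ((2 * (j2 : ℝ) + 1) / (T - t)) *
      (legendre j2).eval ((2 * s - (T + t)) / (T - t)) *
      (Real.sqrt ((2 * (j1 : ℝ) + 1) / (T - t)) *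
        ((T - t) / 2 * (legendrePrimitive j1).eval ((2 * s - (T + t)) / (T - t)))) =
      Real.sqrt ((2 * (j2 : ℝ) + 1) / (T - t)) * Real.sqrt ((2 * (j1 : ℝ) + 1) / (T - t)) *
        ((T - t) / 2) * ((legendre j2).eval ((2 * s - (T + t)) / (T - t)) *
          (legendrePrimitive j1).eval ((2 * s - (T + t)) / (T - t))) := fun s => by ring
  simp only [hfun]
  rw [intervalIntegral.integral_const_mul,
    integral_comp_affine_unit h fun u => (legendre j2).eval u * (legendrePrimitive j1).eval u,
    show (2 * T - (T + t)) / (T - t) = 1 by field_simp; ring, ← legendreKernelCoeff]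
  ring

theorem sq_scaledLegendreCoeff {t T : ℝ} (h : t < T) (j2 j1 : ℕ) :
    scaledLegendreCoeff t T j2 j1 ^ 2 =
      (T - t) ^ 2 / 16 * ((2 * j2 + 1) * (2 * j1 + 1)) * legendreKernelCoeff j2 j1 ^ 2 := by
  have hTt : 0 < T - t := sub_pos.2 h
  rw [scaledLegendreCoeff_eq h.ne, mul_pow, mul_pow, mul_pow, Real.sq_sqrt (by positivity),
    Real.sq_sqrt (by positivity)]
  field_simp
  ring

theorem sum_range_one_div_odd_mul_odd (q : ℕ) :
    ∑ i ∈ range q, 1 / ((2 * i + 1) * (2 * i + 3) : ℝ) = 1 / 2 - 1 / (2 * (2 * q + 1)) := by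
  induction q with
  | zero => norm_num
  | succ q ih =>
    rw [sum_range_succ, ih]
    push_cast
    field_simp
    ring

theorem hasSum_one_div_odd_mul_odd :
    HasSum (fun i : ℕ => 1 / ((2 * i + 1) * (2 * i + 3) : ℝ)) (1 / 2) := by
  refine (hasSum_iff_tendsto_nat_of_nonneg (fun i => by positivity) _).2 ?_
  simp_rw [sum_range_one_div_odd_mul_odd]
  have hden : Tendsto (fun q : ℕ => 2 * (2 * (q : ℝ) + 1)) atTop atTop :=
    tendsto_atTop_mono (fun q => by linarith [q.cast_nonneg (α := ℝ)]) tendsto_natCast_atTop_atTop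
  simpa using (tendsto_const_nhds (x := (1 / 2 : ℝ))).sub
    ((tendsto_const_nhds (x := (1 : ℝ))).div_atTop hden)

theorem sum_Icc_one_div_four_mul_sq_sub_one (q : ℕ) :
    ∑ i ∈ Icc 1 q, 1 / (4 * (i : ℝ) ^ 2 - 1) =
      ∑ i ∈ range q, 1 / ((2 * i + 1) * (2 * i + 3) : ℝ) := by
  rw [← Ico_add_one_right_eq_Icc, sum_Ico_eq_sum_range, Nat.add_sub_cancel]
  refine sum_congr rfl fun i _ => ?_
  push_cast
  ring

theorem sum_range_sum_range_sq_scaledLegendreCoeff {t T : ℝ} (h : t < T) (q : ℕ) :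
    ∑ j1 ∈ range (q + 1), ∑ j2 ∈ range (q + 1), scaledLegendreCoeff t T j2 j1 ^ 2 =
      (T - t) ^ 2 / 2 * (1 / 2 + ∑ i ∈ range q, 1 / ((2 * i + 1) * (2 * i + 3) : ℝ)) := by
  have hband : ∀ i j, i + 2 ≤ j ∨ j + 2 ≤ i → scaledLegendreCoeff t T i j ^ 2 = 0 :=
    fun i j hij => by
      rw [sq_scaledLegendreCoeff h, legendreKernelCoeff_eq_zero_of_add_two_le_or hij]; ring
  have hdiag : ∑ i ∈ range (q + 1), scaledLegendreCoeff t T i i ^ 2 = (T - t) ^ 2 / 4 := by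
    rw [sum_eq_single_of_mem 0 (by simp) fun i _ hi => by
        rw [sq_scaledLegendreCoeff h, legendreKernelCoeff_self hi]; ring,
      sq_scaledLegendreCoeff h, legendreKernelCoeff_zero_zero]
    norm_num
    ring
  have hoff : ∀ i : ℕ,
      scaledLegendreCoeff t T (i + 1) i ^ 2 + scaledLegendreCoeff t T i (i + 1) ^ 2 =
        (T - t) ^ 2 / 2 * (1 / ((2 * i + 1) * (2 * i + 3))) := fun i => by
    rw [sq_scaledLegendreCoeff h, sq_scaledLegendreCoeff h, legendreKernelCoeff_succ_self,
      legendreKernelCoeff_self_succ]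
    push_cast
    field_simp
    ring
  rw [sum_range_sum_range_of_tridiagonal hband, hdiag, sum_congr rfl fun i _ => hoff i,
    ← mul_sum]
  ring

end LegendreKernel

/-- for the Fourier–Legendre coefficients
`C_{j₂j₁} = ∫_t^T φ_{j₂}(t₂)(∫_t^{t₂} φ_{j₁}(t₁) dt₁) dt₂` of the kernel `1_{t₁<t₂}`,
one has `Σ_{j₁,j₂=0}^q C_{j₂j₁}² = ((T−t)²/2)(1/2 + Σ_{i=1}^q 1/(4i²−1))` and
`Σ_{j₁,j₂=0}^∞ C_{j₂j₁}² = (T−t)²/2`. -/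
theorem double_fourier_legendre_partial_parseval
    (t T : ℝ) (ht : t < T)
    (φ : ℕ → ℝ → ℝ)
    (hφ : ∀ j x, φ j x = Real.sqrt ((2 * (j : ℝ) + 1) / (T - t)) *
      (legendre j).eval ((2 * x - (T + t)) / (T - t)))
    (C : ℕ → ℕ → ℝ)
    (hC : ∀ j2 j1, C j2 j1 = ∫ t2 in t..T, φ j2 t2 * ∫ t1 in t..t2, φ j1 t1) :
    (∀ q : ℕ, 1 ≤ q →
      ∑ j1 ∈ Finset.range (q + 1), ∑ j2 ∈ Finset.range (q + 1), (C j2 j1) ^ 2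
        = (T - t) ^ 2 / 2 *
            (1 / 2 + ∑ i ∈ Finset.Icc 1 q, (1 : ℝ) / (4 * (i : ℝ) ^ 2 - 1))) ∧
    HasSum (fun p : ℕ × ℕ => (C p.2 p.1) ^ 2) ((T - t) ^ 2 / 2) := by
  obtain rfl : φ = scaledLegendre t T := funext fun j => funext (hφ j)
  obtain rfl : C = scaledLegendreCoeff t T := funext fun j2 => funext (hC j2)
  refine ⟨fun q _ => by
    rw [sum_range_sum_range_sq_scaledLegendreCoeff ht, sum_Icc_one_div_four_mul_sq_sub_one], ?_⟩
  refine hasSum_of_tendsto_sum_of_nonneg (fun p => sq_nonneg _) tendsto_range_product_range ?_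
  rw [← Filter.tendsto_add_atTop_iff_nat 1]
  simp_rw [Finset.sum_product, sum_range_sum_range_sq_scaledLegendreCoeff ht]
  convert (hasSum_one_div_odd_mul_odd.tendsto_sum_nat.const_add (1 / 2)).const_mul
    ((T - t) ^ 2 / 2) using 2
  norm_num
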